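/- Let G be a simple connected 4-regular vertex-transitive triangle-free graph of odd order, and let H be a vertex subset of G with |H| > 3 and |V(G) \ H| ≥ 4 such that both the subgraph induced by H and the subgraph induced by V(G) \ H are connected, and the number of edges with exactly one end in H equals 8. Then every vertex v of G is incident with at most 2 edges having exactly one end in H. -/

import Mathlib

open SimpleGraph

/-- The set of edges of `G` with exactly one end in `S`. -/
def edgeBoundary {V : Type*} (G : SimpleGraph V) (S : Set V) : Set (Sym2 V) :=
  {e | e ∈ G.edgeSet ∧ ∃ x ∈ S, ∃ y ∉ S, e = s(x, y)}

/-!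
Write `d(S)` for the number of edges leaving `S`. In a `4`-regular graph `d(S) = 4|S| - 2e(S)`,
and Mantel's bound `e(S) ≤ |S|²/4` for triangle-free graphs gives `8|S| ≤ |S|² + 2 d(S)`: the sides
of small cuts are large.

Take a smallest side `A` (an atom) among the cuts with `d ≤ c` and at least `k` vertices on each
side, for `(k, c) = (1, 3)`, `(2, 4)`, `(3, 6)` in turn. Posimodularity and submodularity of `d`,
together with the bound of the previous step, prevent `A` from crossing any of its images under
automorphisms, so `A` is a block of imprimitivity of `Aut G`. Hence every vertex of `A` sends the
same number of edges out of `A`, so `|A|` divides `d(A)`, and `|A|` divides `|V|`. This gives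
`d(S) ≥ 4`, then `d(S) ≥ 5` when both sides have two vertices, and finally `d(S) ≥ 7` when both
sides have three vertices: an atom of a `6`-cut would have exactly `6` vertices, against the odd
order.

If now `v ∈ H` had `k ≥ 3` edges leaving `H`, then `d(H \ {v}) = 8 + (4 - k) - k ≤ 6` although
both `H \ {v}` and its complement have at least three vertices.
-/

open Finset MulAction
open scoped Pointwise

lemma Finset.smul_finset_compl {α β : Type*} [Group α] [MulAction α β] [Fintype β]
    [DecidableEq β] (a : α) (s : Finset β) : a • sᶜ = (a • s)ᶜ := by
  apply coe_injective
  push_cast [coe_smul_finset]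
  exact Set.smul_set_compl

namespace SimpleGraph

section Interedges

variable {V : Type*} {G : SimpleGraph V} [DecidableRel G.Adj] {s t u : Finset V}

lemma card_interedges_comm (s t : Finset V) : #(G.interedges s t) = #(G.interedges t s) :=
  have := G.symm
  Rel.card_interedges_comm s t

lemma card_interedges_eq_sum (s t : Finset V) :
    #(G.interedges s t) = ∑ v ∈ s, #(G.interedges {v} t) := by
  simp only [interedges_def, card_filter, sum_product, sum_singleton]

lemma card_interedges_self_eq_two_mul (s : Finset V) :
    #(G.interedges s s) = 2 * #(G.induce (s : Set V)).edgeFinset := by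
  rw [← dart_card_eq_twice_card_edges, ← card_univ]
  symm
  refine card_nbij (fun d => (d.fst.1, d.snd.1))
    (fun d _ => by simpa [mem_interedges_iff] using d.adj) ?_ ?_
  · intro d _ d' _ h
    simp only [Prod.mk.injEq] at h
    exact Dart.ext _ _ (Prod.ext (Subtype.ext h.1) (Subtype.ext h.2))
  · rintro ⟨a, b⟩ h
    rw [mem_coe, mem_interedges_iff] at h
    exact ⟨⟨(⟨a, h.1⟩, ⟨b, h.2.1⟩), h.2.2⟩, mem_coe.2 (mem_univ _), rfl⟩

lemma even_card_interedges_self (s : Finset V) : Even #(G.interedges s s) := by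
  rw [card_interedges_self_eq_two_mul]
  exact even_two_mul _

/-- Mantel's theorem, via Turán's theorem for `r = 2`. -/
lemma two_mul_card_interedges_self_le (htf : G.CliqueFree 3) (s : Finset V) :
    2 * #(G.interedges s s) ≤ #s ^ 2 := by
  have hturan := (htf.comap (Embedding.induce (s : Set V)).isContained :
    (G.induce (s : Set V)).CliqueFree (2 + 1)).card_edgeFinset_le
  have hchoose : (#s % 2).choose 2 = 0 := Nat.choose_eq_zero_of_lt (Nat.mod_lt _ two_pos)
  simp only [coe_sort_coe, Fintype.card_coe, hchoose] at hturan
  rw [card_interedges_self_eq_two_mul]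
  omega

omit [DecidableRel G.Adj] in
lemma adj_smul_iff (φ : G ≃g G) {a b : V} : G.Adj (φ • a) (φ • b) ↔ G.Adj a b :=
  φ.map_adj_iff

variable [DecidableEq V]

lemma card_interedges_union_left (h : Disjoint s t) (u : Finset V) :
    #(G.interedges (s ∪ t) u) = #(G.interedges s u) + #(G.interedges t u) := by
  rw [← card_union_of_disjoint (interedges_disjoint_left G h u), interedges_def, interedges_def,
    interedges_def, union_product, filter_union]

lemma card_interedges_union_right (s : Finset V) (h : Disjoint t u) :
    #(G.interedges s (t ∪ u)) = #(G.interedges s t) + #(G.interedges s u) := by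
  simp only [card_interedges_comm s]
  exact card_interedges_union_left h s

lemma card_interedges_singleton_erase (v : V) (s : Finset V) :
    #(G.interedges {v} (s.erase v)) = #(G.interedges {v} s) := by
  congr 1
  ext ⟨a, b⟩
  simp only [mem_interedges_iff, mem_singleton, mem_erase]
  constructor
  · tauto
  · rintro ⟨rfl, hb, hab⟩
    exact ⟨rfl, ⟨hab.ne', hb⟩, hab⟩

lemma card_interedges_smul (φ : G ≃g G) (s t : Finset V) :
    #(G.interedges (φ • s) (φ • t)) = #(G.interedges s t) := by
  refine card_nbij' (fun p => (φ⁻¹ • p.1, φ⁻¹ • p.2)) (fun p => (φ • p.1, φ • p.2))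
    ?_ ?_ (fun p _ => by simp) (fun p _ => by simp)
  · rintro ⟨a, b⟩ h
    rw [mem_coe, mem_interedges_iff] at h ⊢
    exact ⟨inv_smul_mem_iff.2 h.1, inv_smul_mem_iff.2 h.2.1, (adj_smul_iff φ⁻¹).2 h.2.2⟩
  · rintro ⟨a, b⟩ h
    rw [mem_coe, mem_interedges_iff] at h ⊢
    exact ⟨smul_mem_smul_finset h.1, smul_mem_smul_finset h.2.1, (adj_smul_iff φ).2 h.2.2⟩

end Interedges

section Cut

variable {V : Type*} [Fintype V] [DecidableEq V] {G : SimpleGraph V} [DecidableRel G.Adj]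
  {d : ℕ} {s : Finset V}

variable (G) in
/-- The paper's `d(S)`, counted as ordered pairs `(x, y)` of adjacent vertices with `x ∈ s` and
`y ∉ s`. -/
def cutSize (s : Finset V) : ℕ := #(G.interedges s sᶜ)

lemma cutSize_compl (s : Finset V) : G.cutSize sᶜ = G.cutSize s := by
  rw [cutSize, cutSize, compl_compl, card_interedges_comm]

lemma cutSize_eq_sum (s : Finset V) :
    G.cutSize s = ∑ p : V × V, if p.1 ∈ s ∧ p.2 ∉ s ∧ G.Adj p.1 p.2 then 1 else 0 := by
  rw [← card_filter, cutSize]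
  congr 1
  ext p
  simp [mem_interedges_iff]

lemma cutSize_inter_add_cutSize_union_le (s t : Finset V) :
    G.cutSize (s ∩ t) + G.cutSize (s ∪ t) ≤ G.cutSize s + G.cutSize t := by
  simp only [cutSize_eq_sum, ← sum_add_distrib]
  refine sum_le_sum fun p _ => ?_
  by_cases p.1 ∈ s <;> by_cases p.1 ∈ t <;> by_cases p.2 ∈ s <;> by_cases p.2 ∈ t <;>
    by_cases G.Adj p.1 p.2 <;> simp [*]

lemma cutSize_sdiff_add_cutSize_sdiff_le (s t : Finset V) :
    G.cutSize (s \ t) + G.cutSize (t \ s) ≤ G.cutSize s + G.cutSize t := by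
  have h := cutSize_inter_add_cutSize_union_le (G := G) s tᶜ
  rw [← cutSize_compl (s ∪ tᶜ), cutSize_compl t, compl_union, compl_compl] at h
  rwa [sdiff_eq_inter_compl, sdiff_eq_inter_compl, inter_comm t]

lemma cutSize_smul (φ : G ≃g G) (s : Finset V) : G.cutSize (φ • s) = G.cutSize s := by
  rw [cutSize, ← smul_finset_compl, card_interedges_smul, cutSize]

omit [DecidableEq V] in
lemma card_interedges_singleton_univ (v : V) : #(G.interedges {v} univ) = G.degree v := by
  simp only [interedges_def, card_filter, sum_product, sum_singleton]
  rw [← card_filter, ← neighborFinset_eq_filter, card_neighborFinset_eq_degree]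

lemma card_interedges_singleton_add_compl (hreg : G.IsRegularOfDegree d) (v : V)
    (s : Finset V) : #(G.interedges {v} s) + #(G.interedges {v} sᶜ) = d := by
  rw [← card_interedges_union_right _ disjoint_compl_right, union_compl,
    card_interedges_singleton_univ, hreg v]

lemma card_interedges_self_add_cutSize (hreg : G.IsRegularOfDegree d) (s : Finset V) :
    #(G.interedges s s) + G.cutSize s = d * #s := by
  rw [cutSize, card_interedges_eq_sum, card_interedges_eq_sum, ← sum_add_distrib,
    sum_congr rfl fun v _ => card_interedges_singleton_add_compl hreg v s, sum_const,
    smul_eq_mul, mul_comm]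

lemma even_cutSize (hreg : G.IsRegularOfDegree d) (hd : Even d) (s : Finset V) :
    Even (G.cutSize s) := by
  have h := card_interedges_self_add_cutSize hreg s
  exact (Nat.even_add.1 (h ▸ hd.mul_right _)).1 (even_card_interedges_self s)

lemma two_mul_mul_card_le_sq_add_cutSize (hreg : G.IsRegularOfDegree d) (htf : G.CliqueFree 3)
    (s : Finset V) : 2 * d * #s ≤ #s ^ 2 + 2 * G.cutSize s := by
  have h := card_interedges_self_add_cutSize hreg s
  have := two_mul_card_interedges_self_le htf s
  linarith

lemma cutSize_pos (hconn : G.Connected) (hs : s.Nonempty) (hsc : sᶜ.Nonempty) :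
    0 < G.cutSize s := by
  obtain ⟨x, hx⟩ := hs
  obtain ⟨y, hy⟩ := hsc
  obtain ⟨w⟩ := hconn.preconnected x y
  obtain ⟨e, -, he, he'⟩ := w.exists_boundary_dart s hx (by simpa using hy)
  exact card_pos.2 ⟨(e.fst, e.snd), (mem_interedges_iff G).2 ⟨he, by simpa using he', e.adj⟩⟩

lemma cutSize_erase_add {v : V} (hv : v ∈ s) :
    G.cutSize (s.erase v) + #(G.interedges {v} sᶜ) = G.cutSize s + #(G.interedges {v} s) := by
  have hv' : v ∉ sᶜ := by simpa using hv
  have h₁ : G.cutSize (s.erase v) =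
      #(G.interedges (s.erase v) {v}) + #(G.interedges (s.erase v) sᶜ) := by
    rw [cutSize, compl_erase, insert_eq,
      card_interedges_union_right _ (disjoint_singleton_left.2 hv')]
  have h₂ := card_interedges_union_left (G := G) (disjoint_singleton_left.2 (s.notMem_erase v)) sᶜ
  rw [← insert_eq, insert_erase hv] at h₂
  rw [h₁, cutSize, h₂, ← card_interedges_singleton_erase v s, card_interedges_comm]
  ring

lemma cutSize_eq_card_mul_of_isBlock [IsPretransitive (G ≃g G) V]
    (hs : IsBlock (G ≃g G) (s : Set V)) {a : V} (ha : a ∈ s) :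
    G.cutSize s = #s * #(G.interedges {a} sᶜ) := by
  rw [cutSize, card_interedges_eq_sum, ← smul_eq_mul, ← sum_const]
  refine sum_congr rfl fun v hv => ?_
  obtain ⟨φ, rfl⟩ := exists_smul_eq (G ≃g G) a v
  have hφ : φ • s = s :=
    coe_injective (by rw [coe_smul_finset]; exact isBlock_iff_smul_eq_of_mem.1 hs ha hv)
  conv_lhs => rw [← hφ]
  rw [← smul_finset_singleton, ← smul_finset_compl, card_interedges_smul]

end Cut

section Atom

variable {V : Type*} [Fintype V] [DecidableEq V] {G : SimpleGraph V} [DecidableRel G.Adj]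
  {k c : ℕ} {s t : Finset V}

variable (G) in
def IsSmallCut (k c : ℕ) (s : Finset V) : Prop :=
  k ≤ #s ∧ k ≤ #sᶜ ∧ G.cutSize s ≤ c

variable (G) in
def IsAtom (k c : ℕ) (s : Finset V) : Prop :=
  G.IsSmallCut k c s ∧ ∀ t, G.IsSmallCut k c t → #s ≤ #t

lemma IsSmallCut.compl (hs : G.IsSmallCut k c s) : G.IsSmallCut k c sᶜ :=
  ⟨hs.2.1, by rw [compl_compl]; exact hs.1, by rw [cutSize_compl]; exact hs.2.2⟩

lemma IsSmallCut.smul (hs : G.IsSmallCut k c s) (φ : G ≃g G) : G.IsSmallCut k c (φ • s) :=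
  ⟨by rw [card_smul_finset]; exact hs.1,
    by rw [← smul_finset_compl, card_smul_finset]; exact hs.2.1,
    by rw [cutSize_smul]; exact hs.2.2⟩

lemma IsSmallCut.exists_isAtom (hs : G.IsSmallCut k c s) : ∃ a, G.IsAtom k c a := by
  classical
  obtain ⟨a, ha, hmin⟩ := exists_min_image {t | G.IsSmallCut k c t} card ⟨s, by simpa using hs⟩
  exact ⟨a, (mem_filter.1 ha).2, fun t ht => hmin t (by simpa using ht)⟩

lemma IsAtom.card_sdiff_lt (hs : G.IsAtom k c s) (ht : G.IsSmallCut k c t) (hcard : #t = #s)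
    (hst : (s ∩ t).Nonempty) : #(s \ t) < k := by
  by_contra! hk
  have h₁ := card_sdiff_add_card_inter s t
  have h₂ := card_sdiff_add_card_inter t s
  have h₃ := hst.card_pos
  rw [inter_comm] at h₂
  have hposi := cutSize_sdiff_add_cutSize_sdiff_le (G := G) s t
  rcases le_total (G.cutSize (s \ t)) c with hc | hc
  · have hsmall : G.IsSmallCut k c (s \ t) :=
      ⟨hk, hs.1.1.trans (hcard ▸ card_le_card (subset_compl_iff_disjoint_right.2 disjoint_sdiff)),
        hc⟩
    have := hs.2 _ hsmall
    omega
  · have hsmall : G.IsSmallCut k c (t \ s) :=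
      ⟨by omega, hs.1.1.trans (card_le_card (subset_compl_iff_disjoint_right.2 disjoint_sdiff)),
        by linarith [hs.1.2.2, ht.2.2]⟩
    have := hs.2 _ hsmall
    omega

lemma IsAtom.cutSize_union_lt (hs : G.IsAtom k c s) (ht : G.IsSmallCut k c t)
    (hst : (s \ t).Nonempty) (hk : k ≤ #(s ∩ t)) : G.cutSize (s ∪ t) < c := by
  by_contra! hc
  have hsub := cutSize_inter_add_cutSize_union_le (G := G) s t
  have hsmall : G.IsSmallCut k c (s ∩ t) :=
    ⟨hk, hs.1.2.1.trans (card_le_card (compl_subset_compl.2 inter_subset_left)),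
      by linarith [hs.1.2.2, ht.2.2]⟩
  have := hs.2 _ hsmall
  have := card_sdiff_add_card_inter s t
  have := hst.card_pos
  omega

/-- Crossings with `|s \ t| ≥ k` are already excluded by posimodularity (`card_sdiff_lt`), so
`hcross` only has to rule out small cuts `t` that nearly agree with `s`. -/
lemma IsAtom.isBlock (hs : G.IsAtom k c s)
    (hcross : ∀ t, G.IsSmallCut k c t → (s \ t).Nonempty → #s < #(s ∩ t) + k →
      #(s ∪ t) < #s + k → False) :
    IsBlock (G ≃g G) (s : Set V) := by
  rw [isBlock_iff_smul_eq_of_nonempty]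
  intro φ hφ
  rw [← coe_smul_finset, ← coe_inter, coe_nonempty, inter_comm] at hφ
  rw [← coe_smul_finset, coe_inj]
  by_contra hne
  have hcard : #(φ • s) = #s := card_smul_finset φ s
  have hdiff : (s \ φ • s).Nonempty := by
    rw [sdiff_nonempty]
    exact fun h => hne (eq_of_subset_of_card_le h hcard.le).symm
  have hlt := hs.card_sdiff_lt (hs.1.smul φ) hcard hφ
  have := card_sdiff_add_card_inter s (φ • s)
  have := card_union_add_card_inter s (φ • s)
  exact hcross _ (hs.1.smul φ) hdiff (by omega) (by omega)

end Atom

section Connectivity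

variable {V : Type*} [Fintype V] [DecidableEq V] {G : SimpleGraph V} [DecidableRel G.Adj]
  [IsPretransitive (G ≃g G) V] {d : ℕ} {s : Finset V}

theorem le_cutSize_of_isRegularOfDegree (hconn : G.Connected) (hreg : G.IsRegularOfDegree d)
    (hs : s.Nonempty) (hsc : sᶜ.Nonempty) : d ≤ G.cutSize s := by
  by_contra! hlt
  obtain ⟨a, ha⟩ :=
    (show G.IsSmallCut 1 (d - 1) s from ⟨hs.card_pos, hsc.card_pos, by omega⟩).exists_isAtom
  have hblock := ha.isBlock fun t _ hdiff hinter _ => by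
    have := card_sdiff_add_card_inter a t
    have := hdiff.card_pos
    omega
  obtain ⟨x, hx⟩ := card_pos.1 ha.1.1
  have hcut := cutSize_eq_card_mul_of_isBlock hblock hx
  have hout : 0 < #(G.interedges {x} aᶜ) := by
    have := cutSize_pos hconn (card_pos.1 ha.1.1) (card_pos.1 ha.1.2.1)
    rw [hcut] at this
    exact Nat.pos_of_mul_pos_left this
  have hdeg := card_interedges_singleton_add_compl hreg x a
  have hin : #(G.interedges {x} a) + 1 ≤ #a := by
    have := G.card_interedges_le_mul {x} (a.erase x)
    rw [card_interedges_singleton_erase, card_singleton, card_erase_of_mem hx] at this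
    have := ha.1.1
    omega
  have hcut_lt : G.cutSize a < d := by
    have := ha.1.2.2
    omega
  rw [hcut] at hcut_lt
  nlinarith [Nat.mul_le_mul_right #(G.interedges {x} aᶜ) hin,
    Nat.mul_le_mul_left #(G.interedges {x} a) hout]

theorem lt_cutSize_of_cliqueFree (hconn : G.Connected) (hreg : G.IsRegularOfDegree d)
    (hd : 3 ≤ d) (htf : G.CliqueFree 3) (hs : 2 ≤ #s) (hsc : 2 ≤ #sᶜ) : d < G.cutSize s := by
  by_contra! hle
  have hlarge : ∀ t, G.IsSmallCut 2 d t → d < #t := by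
    intro t ht
    have := two_mul_mul_card_le_sq_add_cutSize hreg htf t
    by_contra!
    nlinarith [ht.1, ht.2.2]
  obtain ⟨a, ha⟩ := (show G.IsSmallCut 2 d s from ⟨hs, hsc, hle⟩).exists_isAtom
  have hA := hlarge a ha.1
  have hAc := hlarge aᶜ ha.1.compl
  have hn := card_add_card_compl a
  have hblock := ha.isBlock fun t ht hdiff hinter hunion => by
    have := card_add_card_compl (a ∪ t)
    have := card_le_card (subset_union_left : a ⊆ a ∪ t)
    have := ha.cutSize_union_lt ht hdiff (by omega)
    have := le_cutSize_of_isRegularOfDegree hconn hreg (s := a ∪ t) (card_pos.1 (by omega))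
      (card_pos.1 (by omega))
    omega
  obtain ⟨x, hx⟩ := card_pos.1 (show 0 < #a by omega)
  have hcut := cutSize_eq_card_mul_of_isBlock hblock hx
  have hd_le := le_cutSize_of_isRegularOfDegree hconn hreg (card_pos.1 (show 0 < #a by omega))
    (card_pos.1 (show 0 < #aᶜ by omega))
  have hle_d := ha.1.2.2
  rcases Nat.eq_zero_or_pos #(G.interedges {x} aᶜ) with h0 | hpos
  · rw [h0, mul_zero] at hcut
    omega
  · nlinarith

theorem seven_le_cutSize (hconn : G.Connected) (hreg : G.IsRegularOfDegree 4)
    (htf : G.CliqueFree 3) (hodd : Odd (Fintype.card V)) (hs : 3 ≤ #s) (hsc : 3 ≤ #sᶜ) :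
    7 ≤ G.cutSize s := by
  by_contra! hle
  have hlarge : ∀ t, G.IsSmallCut 3 6 t → 6 ≤ #t := by
    intro t ht
    have := two_mul_mul_card_le_sq_add_cutSize hreg htf t
    by_contra!
    nlinarith [ht.1, ht.2.2]
  obtain ⟨a, ha⟩ := (show G.IsSmallCut 3 6 s from ⟨hs, hsc, by omega⟩).exists_isAtom
  have hA := hlarge a ha.1
  have hAc := hlarge aᶜ ha.1.compl
  have hn := card_add_card_compl a
  have hblock := ha.isBlock fun t ht hdiff hinter hunion => by
    have := card_add_card_compl (a ∪ t)
    have := card_le_card (subset_union_left : a ⊆ a ∪ t)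
    have := ha.cutSize_union_lt ht hdiff (by omega)
    have := lt_cutSize_of_cliqueFree hconn hreg (by norm_num) htf (s := a ∪ t) (by omega)
      (by omega)
    obtain ⟨r, hr⟩ := even_cutSize hreg (by decide) (a ∪ t)
    omega
  obtain ⟨x, hx⟩ := card_pos.1 (show 0 < #a by omega)
  have hcut := cutSize_eq_card_mul_of_isBlock hblock hx
  have hpos := cutSize_pos hconn (card_pos.1 (show 0 < #a by omega))
    (card_pos.1 (show 0 < #aᶜ by omega))
  have h6 : #a = 6 := by
    have := ha.1.2.2
    rw [hcut] at this hpos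
    nlinarith [Nat.pos_of_mul_pos_left hpos]
  have hdvd := hblock.ncard_dvd_card ⟨x, hx⟩
  rw [Set.ncard_coe_finset, h6, Nat.card_eq_fintype_card] at hdvd
  exact Nat.not_even_iff_odd.2 hodd (even_iff_two_dvd.2 ((by norm_num : 2 ∣ 6).trans hdvd))

theorem card_interedges_singleton_compl_le_two (hconn : G.Connected)
    (hreg : G.IsRegularOfDegree 4) (htf : G.CliqueFree 3) (hodd : Odd (Fintype.card V))
    (hs : 4 ≤ #s) (hsc : 2 ≤ #sᶜ) (hcut : G.cutSize s ≤ 8) {v : V} (hv : v ∈ s) :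
    #(G.interedges {v} sᶜ) ≤ 2 := by
  by_contra! hout
  have herase := cutSize_erase_add (G := G) hv
  have hdeg := card_interedges_singleton_add_compl hreg v s
  have hcard := card_erase_of_mem hv
  have := card_add_card_compl s
  have := card_add_card_compl (s.erase v)
  have := seven_le_cutSize hconn hreg htf hodd (s := s.erase v) (by omega) (by omega)
  omega

end Connectivity

end SimpleGraph

section EdgeBoundary

variable {V : Type*} {G : SimpleGraph V}

lemma edgeBoundary_compl (H : Set V) : edgeBoundary G Hᶜ = edgeBoundary G H := by
  ext e
  simp only [edgeBoundary, Set.mem_compl_iff, not_not]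
  constructor <;> rintro ⟨he, x, hx, y, hy, rfl⟩ <;> exact ⟨he, y, hy, x, hx, Sym2.eq_swap⟩

variable [Fintype V] [DecidableEq V] [DecidableRel G.Adj]

lemma injOn_sym2_interedges_compl (s : Finset V) :
    Set.InjOn (fun p : V × V => s(p.1, p.2)) (G.interedges s sᶜ : Set (V × V)) := by
  rintro ⟨a, b⟩ hab ⟨a', b'⟩ hab' h
  simp only [mem_coe, mem_interedges_iff, mem_compl] at hab hab'
  rcases Sym2.eq_iff.1 h with ⟨rfl, rfl⟩ | ⟨rfl, rfl⟩
  · rfl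
  · exact absurd hab.1 hab'.2.1

lemma edgeBoundary_coe (s : Finset V) :
    edgeBoundary G s = (fun p : V × V => s(p.1, p.2)) '' (G.interedges s sᶜ : Set (V × V)) := by
  ext e
  constructor
  · rintro ⟨he, x, hx, y, hy, rfl⟩
    exact ⟨(x, y), (mem_interedges_iff G).2 ⟨hx, by simpa using hy, he⟩, rfl⟩
  · rintro ⟨⟨x, y⟩, h, rfl⟩
    rw [mem_coe, mem_interedges_iff, mem_compl] at h
    exact ⟨h.2.2, x, h.1, y, h.2.1, rfl⟩

lemma incidenceSet_inter_edgeBoundary_coe {s : Finset V} {v : V} (hv : v ∈ s) :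
    G.incidenceSet v ∩ edgeBoundary G s =
      (fun p : V × V => s(p.1, p.2)) '' (G.interedges {v} sᶜ : Set (V × V)) := by
  ext e
  constructor
  · rintro ⟨⟨-, hve⟩, he, x, hx, y, hy, rfl⟩
    rcases Sym2.mem_iff.1 hve with rfl | rfl
    · exact ⟨(v, y), (mem_interedges_iff G).2 ⟨mem_singleton_self v, by simpa using hy, he⟩, rfl⟩
    · exact absurd hv hy
  · rintro ⟨⟨x, y⟩, h, rfl⟩
    rw [mem_coe, mem_interedges_iff, mem_singleton, mem_compl] at h
    obtain ⟨rfl, hy, hadj⟩ := h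
    exact ⟨⟨hadj, Sym2.mem_mk_left x y⟩, hadj, x, hv, y, hy, rfl⟩

lemma ncard_edgeBoundary_coe (s : Finset V) :
    (edgeBoundary G s).ncard = G.cutSize s := by
  rw [edgeBoundary_coe, (injOn_sym2_interedges_compl s).ncard_image, Set.ncard_coe_finset,
    cutSize]

lemma ncard_incidenceSet_inter_edgeBoundary_coe {s : Finset V} {v : V} (hv : v ∈ s) :
    (G.incidenceSet v ∩ edgeBoundary G s).ncard = #(G.interedges {v} sᶜ) := by
  rw [incidenceSet_inter_edgeBoundary_coe hv, ((injOn_sym2_interedges_compl s).mono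
      (coe_subset.2 (interedges_mono G (singleton_subset_iff.2 hv) subset_rfl))).ncard_image,
    Set.ncard_coe_finset]

end EdgeBoundary

theorem at_most_two_boundary_edges_general {V : Type*} [Fintype V] (G : SimpleGraph V)
    (hconn : G.Connected)
    (hvt : ∀ x y : V, ∃ φ : G ≃g G, φ x = y)
    (hreg : ∀ v : V, (G.neighborSet v).ncard = 4)
    (htf : G.CliqueFree 3)
    (hodd : Odd (Fintype.card V))
    (H : Set V)
    (hH : 3 < H.ncard)
    (hHc : 4 ≤ Hᶜ.ncard)
    (hd : (edgeBoundary G H).ncard = 8) :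
    ∀ v : V, (G.incidenceSet v ∩ edgeBoundary G H).ncard ≤ 2 := by
  classical
  have : IsPretransitive (G ≃g G) V := ⟨hvt⟩
  have hreg' : G.IsRegularOfDegree 4 := fun v => by
    rw [← hreg v, ← card_neighborFinset_eq_degree, neighborFinset, Set.ncard_eq_toFinset_card']
  obtain ⟨S, rfl⟩ := H.toFinite.exists_finset_coe
  rw [Set.ncard_coe_finset] at hH
  rw [← coe_compl, Set.ncard_coe_finset] at hHc
  rw [ncard_edgeBoundary_coe] at hd
  intro v
  by_cases hv : v ∈ S
  · rw [ncard_incidenceSet_inter_edgeBoundary_coe hv]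
    exact card_interedges_singleton_compl_le_two hconn hreg' htf hodd hH (by omega) hd.le hv
  · rw [← edgeBoundary_compl, ← coe_compl,
      ncard_incidenceSet_inter_edgeBoundary_coe (mem_compl.2 hv)]
    exact card_interedges_singleton_compl_le_two hconn hreg' htf hodd hHc
      (by rw [compl_compl]; omega) (by rw [cutSize_compl]; omega) (mem_compl.2 hv)

/-- Let `G` be a connected 4-regular vertex-transitive triangle-free odd graph, and `H` a
vertex subset with `|H| > 3` and `|V \ H| ≥ 4` inducing a connected subgraph whose complement
also induces a connected subgraph, with `d(H) = 8`. Then every vertex is incident with at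
most 2 edges of `∇(H)`. -/
theorem at_most_two_boundary_edges {V : Type*} [Fintype V] (G : SimpleGraph V)
    (hconn : G.Connected)
    (hvt : ∀ x y : V, ∃ φ : G ≃g G, φ x = y)
    (hreg : ∀ v : V, (G.neighborSet v).ncard = 4)
    (htf : G.CliqueFree 3)
    (hodd : Odd (Fintype.card V))
    (H : Set V)
    (hH : 3 < H.ncard)
    (hHc : 4 ≤ Hᶜ.ncard)
    (hHconn : (G.induce H).Connected)
    (hHcconn : (G.induce Hᶜ).Connected)
    (hd : (edgeBoundary G H).ncard = 8) :
    ∀ v : V, (G.incidenceSet v ∩ edgeBoundary G H).ncard ≤ 2 :=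
  at_most_two_boundary_edges_general G hconn hvt hreg htf hodd H hH hHc hd
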